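/- arXiv:2605.02020 — 2 statements merged into one kernel-verified Lean document; each statement's English description precedes it below -/
import Mathlib

section
/- Let δ > 0 and a > 0. Define g : (−a, ∞) → ℝ by g(s) = a^{−δ} − (s + a)^{−δ} and G(s) = ∫₀^s g(τ) dτ. Then for every r ≥ 1 and every s ≥ 0, G(r s) ≤ r² G(s). -/
/-- The translated singular nonlinearity `g(s) = a^{−δ} − (s + a)^{−δ}`. -/
noncomputable def singNonlin (δ a s : ℝ) : ℝ := a ^ (-δ) - (s + a) ^ (-δ)

/-- Its primitive `G(s) = ∫₀^s g(τ) dτ` vanishing at `0`. -/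
noncomputable def singPrimitive (δ a s : ℝ) : ℝ := ∫ τ in (0 : ℝ)..s, singNonlin δ a τ

/-!
Since `x ↦ x^{−δ}` is convex, `g` is concave on `(−a, ∞)`, and `g(0) = 0`; hence
`g(rτ) ≤ r g(τ)` for `r ≥ 1`, `τ ≥ 0`. The substitution `τ ↦ rτ` in `G(rs)` gives one
factor `r`, this pointwise bound the other.
-/

open Set intervalIntegral MeasureTheory

theorem convexOn_rpow_of_nonpos {p : ℝ} (hp : p ≤ 0) :
    ConvexOn ℝ (Ioi 0) fun x : ℝ ↦ x ^ p := by
  refine convexOn_of_hasDerivWithinAt2_nonneg (convex_Ioi 0)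
    (f' := fun x ↦ p * x ^ (p - 1)) (f'' := fun x ↦ p * ((p - 1) * x ^ (p - 1 - 1)))
    (fun x hx ↦ (Real.continuousAt_rpow_const x p (Or.inl hx.out.ne')).continuousWithinAt)
    ?_ ?_ ?_ <;> rw [interior_Ioi] <;> intro x hx
  · exact (Real.hasDerivAt_rpow_const (Or.inl hx.out.ne')).hasDerivWithinAt
  · exact ((Real.hasDerivAt_rpow_const (Or.inl hx.out.ne')).const_mul p).hasDerivWithinAt
  · have : 0 ≤ x ^ (p - 1 - 1) := Real.rpow_nonneg hx.out.le _
    exact mul_nonneg_of_nonpos_of_nonpos hp (mul_nonpos_of_nonpos_of_nonneg (by linarith) this)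

theorem concaveOn_singNonlin {δ : ℝ} (hδ : 0 ≤ δ) (a : ℝ) :
    ConcaveOn ℝ (Ioi (-a)) (singNonlin δ a) := by
  have h := (convexOn_rpow_of_nonpos (neg_nonpos.mpr hδ)).translate_left a
  have hdom : (fun z ↦ a + z) ⁻¹' Ioi 0 = Ioi (-a) := by ext; simp [neg_lt_iff_pos_add]
  rw [hdom] at h
  exact (concaveOn_const (a ^ (-δ)) (convex_Ioi _)).sub h

theorem continuousOn_singNonlin (δ a : ℝ) : ContinuousOn (singNonlin δ a) (Ioi (-a)) :=
  fun _ hx ↦ (continuousAt_const.sub <| (continuousAt_id.add continuousAt_const).rpow_const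
    (Or.inl (neg_lt_iff_pos_add.mp hx).ne')).continuousWithinAt

theorem ConcaveOn.le_mul_of_one_le {E : Type*} [AddCommGroup E] [Module ℝ E] {s : Set E}
    {f : E → ℝ} (hf : ConcaveOn ℝ s f) (h0 : (0 : E) ∈ s) (hf0 : 0 ≤ f 0) {r : ℝ} (hr : 1 ≤ r)
    {x : E} (hrx : r • x ∈ s) : f (r • x) ≤ r * f x := by
  have hr0 : 0 < r := by linarith
  have hx : r⁻¹ • r • x + (1 - r⁻¹) • (0 : E) = x := by
    rw [smul_zero, add_zero, smul_smul, inv_mul_cancel₀ hr0.ne', one_smul]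
  have key := hf.2 hrx h0 (inv_nonneg.mpr hr0.le) (sub_nonneg.mpr (inv_le_one_of_one_le₀ hr))
    (add_sub_cancel _ _)
  rw [hx, smul_eq_mul, smul_eq_mul] at key
  have := mul_le_mul_of_nonneg_left key hr0.le
  have hr_f0 : r * ((1 - r⁻¹) * f 0) = (r - 1) * f 0 := by field_simp
  rw [mul_add, ← mul_assoc, mul_inv_cancel₀ hr0.ne', one_mul, hr_f0] at this
  linarith [mul_nonneg (sub_nonneg.mpr hr) hf0]

theorem integral_mul_le_sq_mul_integral {f : ℝ → ℝ} {r s : ℝ} (hr : 1 ≤ r) (hs : 0 ≤ s)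
    (hf : IntervalIntegrable f volume 0 (r * s)) (hle : ∀ τ ∈ Icc 0 s, f (r * τ) ≤ r * f τ) :
    ∫ τ in 0..r * s, f τ ≤ r ^ 2 * ∫ τ in 0..s, f τ := by
  have hr0 : 0 < r := by linarith
  have hf_s : IntervalIntegrable f volume 0 s :=
    hf.mono_set (uIcc_subset_uIcc_left (by simp [uIcc_of_le, hs, mul_nonneg hr0.le hs,
      le_mul_of_one_le_left hs hr]))
  have hf_comp : IntervalIntegrable (fun τ ↦ f (r * τ)) volume 0 s := by
    simpa [hr0.ne'] using hf.comp_mul_left (c := r)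
  calc ∫ τ in 0..r * s, f τ = r * ∫ τ in 0..s, f (r * τ) := by
        rw [mul_integral_comp_mul_left, mul_zero]
    _ ≤ r * ∫ τ in 0..s, r * f τ := by
        gcongr
        exact integral_mono_on hs hf_comp (hf_s.const_mul r) hle
    _ = r ^ 2 * ∫ τ in 0..s, f τ := by rw [intervalIntegral.integral_const_mul]; ring

/-- For every `r ≥ 1` and `s ≥ 0`, `G(rs) ≤ r² G(s)`. -/
theorem singPrimitive_scaling (δ a : ℝ) (hδ : 0 < δ) (ha : 0 < a) :
    ∀ r : ℝ, 1 ≤ r → ∀ s : ℝ, 0 ≤ s →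
      singPrimitive δ a (r * s) ≤ r ^ 2 * singPrimitive δ a s := by
  intro r hr s hs
  have hIci : Ici (0 : ℝ) ⊆ Ioi (-a) := Ici_subset_Ioi.mpr (neg_neg_of_pos ha)
  have hconc : ConcaveOn ℝ (Ici 0) (singNonlin δ a) :=
    (concaveOn_singNonlin hδ.le a).subset hIci (convex_Ici 0)
  refine integral_mul_le_sq_mul_integral hr hs ?_ fun τ hτ ↦ ?_
  · refine ((continuousOn_singNonlin δ a).mono (hIci.trans' ?_)).intervalIntegrable
    rw [uIcc_of_le (by positivity)]
    exact Icc_subset_Ici_self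
  · exact hconc.le_mul_of_one_le self_mem_Ici (by simp [singNonlin]) hr
      (mul_nonneg (by linarith) hτ.1)
end

section
/- Let q > 2 be a real number and let M > 0. Then there exists a constant β > 0 such that for all real numbers r, s with 0 ≤ r ≤ M and s ≥ 1, (r + s)^q / q − r^q / q − r^{q−1} s ≥ s^q / q + β · r s^{q−1} / (q − 1). In particular this holds for the critical Grushin exponent q = 2*_γ = 2Q/(Q−2) with Q = m + (1+γ)n, γ > 0, n, m ≥ 1. -/
/-!
With `t = r / s ∈ [0, M]`, dividing by `s^q` reduces the claim to
`f(t) := (1 + t)^q - 1 - t^q - q t^{q-1} ≥ c t` on `[0, M]`. Bernoulli gives `(1 + t)^q ≥ 1 + q t`,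
and for small `t` the terms `t^q + q t^{q-1} = O(t^{q-1})` use up at most half of `q t`.
By the tangent-line inequality for `x^{q-1}`, `f' = q ((1 + t)^{q-1} - t^{q-1} - (q - 1) t^{q-2}) ≥ 0`,
so beyond a small threshold `t₀` the value `f(t) ≥ f(t₀) > 0` still dominates a multiple of `t`,
because `t ≤ M`.
-/

open Real Set

lemma rpow_add_tangent_le {p x h : ℝ} (hp : 1 ≤ p) (hx : 0 < x) (hh : 0 ≤ h) :
    x ^ p + p * x ^ (p - 1) * h ≤ (x + h) ^ p := by
  have hbernoulli : 1 + p * (h / x) ≤ (1 + h / x) ^ p :=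
    one_add_mul_self_le_rpow_one_add (by linarith [div_nonneg hh hx.le]) hp
  calc x ^ p + p * x ^ (p - 1) * h = x ^ p * (1 + p * (h / x)) := by
        rw [rpow_sub_one hx.ne']; field_simp
    _ ≤ x ^ p * (1 + h / x) ^ p := by gcongr
    _ = (x + h) ^ p := by
        rw [← mul_rpow hx.le (by positivity)]; congr 1; field_simp

noncomputable def powerIncrementDefect (q t : ℝ) : ℝ :=
  (1 + t) ^ q - 1 - t ^ q - q * t ^ (q - 1)

section powerIncrementDefect

variable {q : ℝ}

lemma rpow_mul_powerIncrementDefect_div {r s : ℝ} (hr : 0 ≤ r) (hs : 0 < s) :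
    s ^ q * powerIncrementDefect q (r / s) = (r + s) ^ q - s ^ q - r ^ q - q * r ^ (q - 1) * s := by
  have hsq : s ^ q = s ^ (q - 1) * s := by rw [rpow_sub_one hs.ne']; field_simp
  have hsum : 1 + r / s = (r + s) / s := by field_simp; ring
  rw [powerIncrementDefect, hsum, div_rpow (by positivity) hs.le, div_rpow hr hs.le,
    div_rpow hr hs.le, hsq]
  field_simp

lemma hasDerivAt_powerIncrementDefect (hq : 2 ≤ q) (t : ℝ) :
    HasDerivAt (powerIncrementDefect q)
      (q * (1 + t) ^ (q - 1) - q * t ^ (q - 1) - q * ((q - 1) * t ^ (q - 2))) t := by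
  have h1 : HasDerivAt (fun t : ℝ => (1 + t) ^ q) (q * (1 + t) ^ (q - 1)) t := by
    simpa using ((hasDerivAt_id t).const_add 1).rpow_const (p := q) (Or.inr (by linarith))
  have h2 : HasDerivAt (fun t : ℝ => t ^ q) (q * t ^ (q - 1)) t :=
    hasDerivAt_rpow_const (Or.inr (by linarith))
  have h3 : HasDerivAt (fun t : ℝ => t ^ (q - 1)) ((q - 1) * t ^ (q - 2)) t := by
    convert hasDerivAt_rpow_const (x := t) (p := q - 1) (Or.inr (by linarith)) using 3; ring
  exact ((h1.sub_const 1).sub h2).sub (h3.const_mul q)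

lemma monotoneOn_powerIncrementDefect (hq : 2 ≤ q) :
    MonotoneOn (powerIncrementDefect q) (Ici 0) := by
  have hderiv := hasDerivAt_powerIncrementDefect hq
  refine monotoneOn_of_deriv_nonneg (convex_Ici 0)
    (fun t _ => (hderiv t).continuousAt.continuousWithinAt)
    (fun t _ => (hderiv t).differentiableAt.differentiableWithinAt) fun t ht => ?_
  rw [interior_Ici] at ht
  have htangent := rpow_add_tangent_le (p := q - 1) (by linarith) ht zero_le_one
  rw [show q - 1 - 1 = q - 2 by ring] at htangent
  rw [(hderiv t).deriv, add_comm 1 t]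
  nlinarith

lemma half_mul_le_powerIncrementDefect (hq : 1 < q) {t : ℝ} (ht : 0 ≤ t) (ht1 : t ≤ 1)
    (htq : (1 + q) * t ^ (q - 2) ≤ q / 2) : q / 2 * t ≤ powerIncrementDefect q t := by
  have hbernoulli : 1 + q * t ≤ (1 + t) ^ q :=
    one_add_mul_self_le_rpow_one_add (by linarith) hq.le
  have hsub_one : t ^ (q - 1) = t ^ (q - 2) * t := by
    rw [← rpow_add_one' ht (by linarith)]; ring_nf
  have hq_eq : t ^ q = t ^ (q - 1) * t := by
    rw [← rpow_add_one' ht (by linarith)]; ring_nf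
  have hpos : 0 ≤ t ^ (q - 2) := rpow_nonneg ht _
  rw [powerIncrementDefect, hq_eq, hsub_one]
  nlinarith [mul_le_mul_of_nonneg_left ht1 (mul_nonneg hpos ht),
    mul_le_mul_of_nonneg_right htq ht]

lemma exists_pos_mul_le_powerIncrementDefect (hq : 2 < q) {M : ℝ} (hM : 0 < M) :
    ∃ c > 0, ∀ t ∈ Icc 0 M, c * t ≤ powerIncrementDefect q t := by
  set ε := q / (2 * (1 + q))
  have hε : 0 < ε := by positivity
  have hε1 : ε ≤ 1 := by rw [div_le_one (by positivity)]; linarith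
  set t₀ := ε ^ (q - 2)⁻¹
  have ht₀ : 0 < t₀ := by positivity
  refine ⟨q / 2 * min 1 (t₀ / M), by positivity, fun t ⟨ht, htM⟩ => ?_⟩
  set u := min t t₀
  have hu : 0 ≤ u := le_min ht ht₀.le
  have hu1 : u ≤ 1 := (min_le_right _ _).trans (rpow_le_one hε.le hε1 (by simp; linarith))
  have huq : (1 + q) * u ^ (q - 2) ≤ q / 2 := by
    have : u ^ (q - 2) ≤ ε := by
      calc u ^ (q - 2) ≤ t₀ ^ (q - 2) := rpow_le_rpow hu (min_le_right _ _) (by linarith)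
        _ = ε := rpow_inv_rpow hε.le (by linarith)
    calc (1 + q) * u ^ (q - 2) ≤ (1 + q) * ε := by gcongr
      _ = q / 2 := by simp only [ε]; field_simp
  have hscale : min 1 (t₀ / M) * t ≤ u := by
    refine le_min ?_ ?_
    · exact mul_le_of_le_one_left ht (min_le_left _ _)
    · calc min 1 (t₀ / M) * t ≤ t₀ / M * M := by gcongr; exact min_le_right _ _
        _ = t₀ := div_mul_cancel₀ _ hM.ne'
  calc q / 2 * min 1 (t₀ / M) * t ≤ q / 2 * u := by rw [mul_assoc]; gcongr
    _ ≤ powerIncrementDefect q u := half_mul_le_powerIncrementDefect (by linarith) hu hu1 huq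
    _ ≤ powerIncrementDefect q t :=
        monotoneOn_powerIncrementDefect hq.le hu ht (min_le_left _ _)

end powerIncrementDefect

/-- For a real exponent `q > 2` and `M > 0` there is `β > 0` such that for `0 ≤ r ≤ M` and
`s ≥ 1`: `(r + s)^q / q − r^q / q − r^{q−1} s ≥ s^q / q + β r s^{q−1} / (q − 1)`.
In particular this applies to the critical Grushin exponent `q = 2Q/(Q−2) > 2`. -/
theorem convex_power_increment_refined (q M : ℝ) (hq : 2 < q) (hM : 0 < M) :
    ∃ β : ℝ, 0 < β ∧ ∀ r s : ℝ, 0 ≤ r → r ≤ M → 1 ≤ s →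
      s ^ q / q + β * (r * s ^ (q - 1)) / (q - 1)
        ≤ (r + s) ^ q / q - r ^ q / q - r ^ (q - 1) * s := by
  obtain ⟨c, hc, hdefect⟩ := exists_pos_mul_le_powerIncrementDefect hq hM
  have hq0 : 0 < q := by linarith
  have hq1 : 0 < q - 1 := by linarith
  refine ⟨c * (q - 1) / q, by positivity, fun r s hr hrM hs => ?_⟩
  have hs0 : 0 < s := by linarith
  have hkey : c * (r * s ^ (q - 1)) ≤ (r + s) ^ q - s ^ q - r ^ q - q * r ^ (q - 1) * s := by
    rw [← rpow_mul_powerIncrementDefect_div hr hs0]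
    have := hdefect (r / s) ⟨by positivity, (div_le_self hr hs).trans hrM⟩
    calc c * (r * s ^ (q - 1)) = s ^ q * (c * (r / s)) := by
          rw [rpow_sub_one hs0.ne']; field_simp
      _ ≤ _ := by gcongr
  have hβ : c * (q - 1) / q * (r * s ^ (q - 1)) / (q - 1) = c * (r * s ^ (q - 1)) / q := by
    field_simp
  have hmid : r ^ (q - 1) * s = q * r ^ (q - 1) * s / q := by field_simp
  rw [hβ, hmid, ← add_div, ← sub_div, ← sub_div]
  gcongr
  linarith
end
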